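/- Let α ≥ 0, r ≥ 0, δ ∈ ℝ and β ∈ {0,1}, and Λ₋(k) = −(1/2)√(2√(k²+k⁴)+2k²). Then there exists C such that for all t ≥ 1 and k ∈ ℝ, e^{Λ₋(k)(t−1)} ∫_{(t+1)/2}^{t} e^{|Λ₋(k)|(s−1)} |Λ₋(k)|^β s^{−δ} μ_{α,r}(k,s) ds ≤ C t^{−(δ−1+β)} μ_{α,r}(k,t). -/

import Mathlib

/-!
With `L = |Λ₋(k)| = -Λ₋(k)` the prefactor merges with the integrand into the kernel
`L^β e^{-L(t-s)}`. For `s ∈ [(t+1)/2, t]` we have `t ≤ 2s`, so `s^{-δ} μ_{α,r}(k,s)` is at most a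
constant times `t^{-δ} μ_{α,r}(k,t)`. The kernel's mass on the interval is at most its length
`≤ t` when `β = 0`, and at most `1` when `β = 1`, where it is an exact derivative.
-/

open MeasureTheory

noncomputable def mu (α r k t : ℝ) : ℝ := 1 / (1 + (|k| * t ^ r) ^ α)

noncomputable def LamMinus (k : ℝ) : ℝ := -(1/2) * Real.sqrt (2 * Real.sqrt (k^2 + k^4) + 2 * k^2)

open Real

lemma LamMinus_nonpos (k : ℝ) : LamMinus k ≤ 0 :=
  mul_nonpos_of_nonpos_of_nonneg (by norm_num) (sqrt_nonneg _)

lemma mu_nonneg (α r k : ℝ) {t : ℝ} (ht : 0 ≤ t) : 0 ≤ mu α r k t := by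
  unfold mu; positivity

lemma mu_le_of_le_mul {α r c s t : ℝ} (k : ℝ) (hα : 0 ≤ α) (hr : 0 ≤ r) (hc : 1 ≤ c)
    (ht : 0 ≤ t) (htc : t ≤ c * s) : mu α r k s ≤ c ^ (r * α) * mu α r k t := by
  have hs : 0 ≤ s := nonneg_of_mul_nonneg_right (ht.trans htc) (by linarith)
  have hX : (|k| * t ^ r) ^ α ≤ c ^ (r * α) * (|k| * s ^ r) ^ α :=
    calc (|k| * t ^ r) ^ α ≤ (|k| * (c * s) ^ r) ^ α := by gcongr
      _ = c ^ (r * α) * (|k| * s ^ r) ^ α := by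
        rw [mul_rpow (by linarith) hs, rpow_mul (by linarith),
          mul_left_comm, mul_rpow (by positivity) (by positivity)]
  have hone : 1 ≤ c ^ (r * α) := one_le_rpow hc (by positivity)
  have hXs : 0 ≤ (|k| * s ^ r) ^ α := by positivity
  unfold mu
  rw [mul_one_div, div_le_div_iff₀ (by positivity) (by positivity)]
  nlinarith

lemma rpow_neg_le_of_le_mul {c s t : ℝ} (δ : ℝ) (hs : 0 < s) (hst : s ≤ t) (htc : t ≤ c * s) :
    s ^ (-δ) ≤ max (c ^ δ) 1 * t ^ (-δ) := by
  have ht : 0 < t := hs.trans_le hst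
  have hratio : s ^ (-δ) = (t / s) ^ δ * t ^ (-δ) := by
    rw [div_rpow ht.le hs.le, rpow_neg ht.le, rpow_neg hs.le]
    field_simp
  have hq : 1 ≤ t / s := (one_le_div hs).2 hst
  rw [hratio]
  gcongr
  rcases le_total 0 δ with hδ | hδ
  · exact le_max_of_le_left (rpow_le_rpow (by linarith) ((div_le_iff₀ hs).2 htc) hδ)
  · exact le_max_of_le_right (rpow_le_one_of_one_le_of_nonpos hq hδ)

lemma rpow_neg_mul_mu_le_of_half_le {s t : ℝ} (α r δ k : ℝ) (hα : 0 ≤ α) (hr : 0 ≤ r)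
    (hs : 0 < s) (hst : s ≤ t) (hts : t ≤ 2 * s) :
    s ^ (-δ) * mu α r k s ≤ max (2 ^ δ) 1 * 2 ^ (r * α) * (t ^ (-δ) * mu α r k t) :=
  calc s ^ (-δ) * mu α r k s
      ≤ (max (2 ^ δ) 1 * t ^ (-δ)) * (2 ^ (r * α) * mu α r k t) :=
        mul_le_mul (rpow_neg_le_of_le_mul δ hs hst hts)
          (mu_le_of_le_mul k hα hr one_le_two (hs.le.trans hst) hts) (mu_nonneg α r k hs.le)
          (mul_nonneg (zero_le_one.trans (le_max_right _ _)) (rpow_nonneg (hs.le.trans hst) _))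
    _ = max (2 ^ δ) 1 * 2 ^ (r * α) * (t ^ (-δ) * mu α r k t) := by ring

lemma exp_mul_integrand_le_of_half_le {L s t : ℝ} (α r δ β k : ℝ) (hα : 0 ≤ α) (hr : 0 ≤ r)
    (hL : 0 ≤ L) (hs : 0 < s) (hst : s ≤ t) (hts : t ≤ 2 * s) :
    exp (-L * (t - 1)) * (exp (L * (s - 1)) * L ^ β * s ^ (-δ) * mu α r k s) ≤
      max (2 ^ δ) 1 * 2 ^ (r * α) * (t ^ (-δ) * mu α r k t) * (L ^ β * exp (L * (s - t))) := by
  have hexp : exp (-L * (t - 1)) * exp (L * (s - 1)) = exp (L * (s - t)) := by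
    rw [← exp_add]; ring_nf
  calc exp (-L * (t - 1)) * (exp (L * (s - 1)) * L ^ β * s ^ (-δ) * mu α r k s)
      = s ^ (-δ) * mu α r k s * (L ^ β * exp (L * (s - t))) := by rw [← hexp]; ring
    _ ≤ _ := mul_le_mul_of_nonneg_right
        (rpow_neg_mul_mu_le_of_half_le α r δ k hα hr hs hst hts) (by positivity)

lemma integral_Icc_exp_mul_sub_le {L a t : ℝ} (hL : 0 ≤ L) (hat : a ≤ t) :
    ∫ s in Set.Icc a t, exp (L * (s - t)) ≤ t - a := by
  have hbound : ∀ s ∈ Set.Icc a t, ‖exp (L * (s - t))‖ ≤ 1 := fun s hs => by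
    rw [norm_of_nonneg (exp_pos _).le, exp_le_one_iff]
    exact mul_nonpos_of_nonneg_of_nonpos hL (by linarith [hs.2])
  have h := norm_setIntegral_le_of_norm_le_const (μ := volume) measure_Icc_lt_top hbound
  rw [volume_real_Icc_of_le hat, one_mul] at h
  exact (le_abs_self _).trans h

lemma integral_Icc_mul_exp_mul_sub {L a t : ℝ} (hat : a ≤ t) :
    ∫ s in Set.Icc a t, L * exp (L * (s - t)) = 1 - exp (L * (a - t)) := by
  rw [integral_Icc_eq_integral_Ioc, ← intervalIntegral.integral_of_le hat]
  have hderiv : ∀ s ∈ Set.uIcc a t,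
      HasDerivAt (fun x => exp (L * (x - t))) (L * exp (L * (s - t))) s := fun s _ => by
    simpa [mul_comm] using (((hasDerivAt_id s).sub_const t).const_mul L).exp
  rw [intervalIntegral.integral_eq_sub_of_hasDerivAt hderiv
    ((by fun_prop : Continuous _).intervalIntegrable a t), sub_self, mul_zero, exp_zero]

lemma integral_Icc_rpow_mul_exp_mul_sub_le {L a t β : ℝ} (hL : 0 ≤ L) (ha : 0 ≤ a)
    (hat : a ≤ t) (hβ : β = 0 ∨ β = 1) :
    ∫ s in Set.Icc a t, L ^ β * exp (L * (s - t)) ≤ t ^ (1 - β) := by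
  rcases hβ with rfl | rfl
  · simpa using (integral_Icc_exp_mul_sub_le hL hat).trans (by linarith)
  · simpa [integral_Icc_mul_exp_mul_sub hat] using (exp_pos _).le

theorem semigroup_Lam_integral_bound_middle (α r δ β : ℝ)
    (hα : 0 ≤ α) (hr : 0 ≤ r) (hβ : β = 0 ∨ β = 1) :
    ∃ C : ℝ, ∀ t k : ℝ, 1 ≤ t →
      Real.exp (LamMinus k * (t - 1)) *
          ∫ s in Set.Icc ((t + 1) / 2) t,
            Real.exp (|LamMinus k| * (s - 1)) * |LamMinus k| ^ β * s ^ (-δ) * mu α r k s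
        ≤ C * t ^ (-(δ - 1 + β)) * mu α r k t := by
  refine ⟨max (2 ^ δ) 1 * 2 ^ (r * α), fun t k ht => ?_⟩
  set L := |LamMinus k|
  have hL : 0 ≤ L := abs_nonneg _
  have hLam : LamMinus k = -L := by simp [L, abs_of_nonpos (LamMinus_nonpos k)]
  have hM : 0 ≤ max (2 ^ δ) 1 * 2 ^ (r * α) * (t ^ (-δ) * mu α r k t) := by
    have := mu_nonneg α r k (by linarith : (0 : ℝ) ≤ t); positivity
  rw [hLam, ← integral_const_mul]
  calc _ ≤ ∫ s in Set.Icc ((t + 1) / 2) t,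
          max (2 ^ δ) 1 * 2 ^ (r * α) * (t ^ (-δ) * mu α r k t) * (L ^ β * exp (L * (s - t))) :=
        integral_mono_of_nonneg
          (ae_restrict_of_forall_mem measurableSet_Icc fun s hs => by
            have : 0 ≤ s := by linarith [hs.1]
            have := mu_nonneg α r k this; positivity)
          (Continuous.integrableOn_Icc (by fun_prop))
          (ae_restrict_of_forall_mem measurableSet_Icc fun s hs =>
            exp_mul_integrand_le_of_half_le α r δ β k hα hr hL (by linarith [hs.1]) hs.2
              (by linarith [hs.1]))
    _ ≤ max (2 ^ δ) 1 * 2 ^ (r * α) * (t ^ (-δ) * mu α r k t) * t ^ (1 - β) := by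
        rw [integral_const_mul]
        exact mul_le_mul_of_nonneg_left
          (integral_Icc_rpow_mul_exp_mul_sub_le hL (by linarith) (by linarith) hβ) hM
    _ = _ := by
        rw [show -(δ - 1 + β) = -δ + (1 - β) by ring, rpow_add (by linarith)]
        ring
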